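/- arXiv:2007.14654 — 3 statements merged into one kernel-verified Lean document; each statement's English description precedes it below -/
import Mathlib

section
/- Let f' ∈ ℝ^n, E₁ ∈ ℝ^{m₁×n}, E₂ ∈ ℝ^{m₁×s}, I₁ ∈ ℝ^{m₂×n}, I₂ ∈ ℝ^{m₂×s}, Z₁ ∈ ℝ^{s×n}, Z₂ ∈ ℝ^{s×s}, and c ∈ ℝ^{m₂} with c ≥ 0; let U₊, V₊, D be a partition of {1,…,s} and set A = {i : cᵢ = 0}. Suppose there are multipliers λ_E, λ_I, λ_Z, μᵘ, μᵛ satisfying the S-stationarity conditions: f' + E₁ᵀλ_E − I₁ᵀλ_I + Z₁ᵀλ_Z = 0; μᵘ = E₂ᵀλ_E − I₂ᵀλ_I + (Z₂ − I)ᵀλ_Z; μᵛ = E₂ᵀλ_E − I₂ᵀλ_I + (Z₂ + I)ᵀλ_Z; μᵘᵢ ≥ 0, μᵛᵢ ≥ 0 for i ∈ D; μᵘᵢ = 0 for i ∈ U₊; μᵛᵢ = 0 for i ∈ V₊; λ_I ≥ 0; λ_Iᵀc = 0; and suppose strict complementarity holds: (λ_I)ᵢ > 0 for all i ∈ A, and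 μᵘᵢ > 0 and μᵛᵢ > 0 for all i ∈ D. Then a vector d = (d_t, d_u, d_v) ∈ ℝ^n × ℝ^s × ℝ^s is a critical direction, i.e. satisfies min(d_{u,i}, d_{v,i}) = 0 for i ∈ D; d_{u,i} = 0 for i ∈ V₊; d_{v,i} = 0 for i ∈ U₊; P_A(I₁d_t + I₂(d_u + d_v)) ≥ 0; E₁d_t + E₂(d_u + d_v) = 0; Z₁d_t + (Z₂ − I)d_u + (Z₂ + I)d_v = 0; f'ᵀd_t = 0, if and only if d lies in the kernel of the tightened Jacobian, i.e. E₁d_t + E₂(d_u + d_v) = 0; P_A(I₁d_t + I₂(d_u + d_v)) = 0; Z₁d_t + (Z₂ − I)d_u + (Z₂ + I)d_v = 0; d_{u,i} = 0 for all i ∈ V₊ ∪ D; and d_{v,i} = 0 for all i ∈ U₊ ∪ D. -/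
/-!
Pairing the stationarity equation with a direction that satisfies the linearized equality
constraints gives `f'ᵀ d_t = λ_Iᵀ (I₁ d_t + I₂ (d_u + d_v)) + μᵘᵀ d_u + μᵛᵀ d_v`. Under the sign
conditions of a critical direction every summand of these three products is nonnegative: off the
active set and off `D` one of its two factors vanishes, and on them both factors have a sign.
Strict complementarity makes each product vanish exactly when the direction components it weights
do, so `f'ᵀ d_t = 0` is equivalent to the extra equations of the tightened Jacobian.
-/

open Matrix

section Complementarity

variable {ι : Type*} {l q : ι → ℝ} {A : Set ι}

theorem mul_nonneg_of_mul_eq_zero_off (hoff : ∀ j ∉ A, l j * q j = 0)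
    (hl : ∀ j ∈ A, 0 ≤ l j) (hq : ∀ j ∈ A, 0 ≤ q j) (j : ι) : 0 ≤ l j * q j := by
  by_cases hj : j ∈ A
  · exact mul_nonneg (hl j hj) (hq j hj)
  · exact (hoff j hj).ge

variable [Fintype ι]

theorem dotProduct_nonneg_of_mul_eq_zero_off (hoff : ∀ j ∉ A, l j * q j = 0)
    (hl : ∀ j ∈ A, 0 ≤ l j) (hq : ∀ j ∈ A, 0 ≤ q j) : 0 ≤ l ⬝ᵥ q :=
  Finset.sum_nonneg fun j _ => mul_nonneg_of_mul_eq_zero_off hoff hl hq j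

theorem dotProduct_eq_zero_iff_of_mul_eq_zero_off (hoff : ∀ j ∉ A, l j * q j = 0)
    (hl : ∀ j ∈ A, 0 < l j) (hq : ∀ j ∈ A, 0 ≤ q j) : l ⬝ᵥ q = 0 ↔ ∀ j ∈ A, q j = 0 := by
  rw [dotProduct, Finset.sum_eq_zero_iff_of_nonneg fun j _ =>
    mul_nonneg_of_mul_eq_zero_off hoff (fun j hj => (hl j hj).le) hq j]
  refine ⟨fun h j hj => (mul_eq_zero.1 (h j (Finset.mem_univ j))).resolve_left (hl j hj).ne',
    fun h j _ => ?_⟩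
  by_cases hj : j ∈ A
  · rw [h j hj, mul_zero]
  · exact hoff j hj

theorem eq_zero_of_dotProduct_eq_zero_of_nonneg {c : ι → ℝ} (hl : ∀ j, 0 ≤ l j)
    (hc : ∀ j, 0 ≤ c j) (hlc : l ⬝ᵥ c = 0) {j : ι} (hj : c j ≠ 0) : l j = 0 := by
  have hterm := (Finset.sum_eq_zero_iff_of_nonneg fun k _ => mul_nonneg (hl k) (hc k)).1 hlc j
    (Finset.mem_univ j)
  exact (mul_eq_zero.1 hterm).resolve_right hj

end Complementarity

theorem dotProduct_eq_of_stationary {ι κ μ ν : Type*} [Fintype ι] [Fintype κ] [Fintype μ]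
    [Fintype ν] {f' : ι → ℝ} {E₁ : Matrix μ ι ℝ} {E₂ : Matrix μ κ ℝ} {I₁ : Matrix ν ι ℝ}
    {I₂ : Matrix ν κ ℝ} {Z₁ : Matrix κ ι ℝ} {Zu Zv : Matrix κ κ ℝ} {lE : μ → ℝ} {lI : ν → ℝ}
    {lZ : κ → ℝ} (hstat : f' + E₁ᵀ *ᵥ lE - I₁ᵀ *ᵥ lI + Z₁ᵀ *ᵥ lZ = 0) {dt : ι → ℝ}
    {du dv : κ → ℝ} (hE : E₁ *ᵥ dt + E₂ *ᵥ (du + dv) = 0)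
    (hZ : Z₁ *ᵥ dt + Zu *ᵥ du + Zv *ᵥ dv = 0) :
    f' ⬝ᵥ dt = lI ⬝ᵥ (I₁ *ᵥ dt + I₂ *ᵥ (du + dv)) + (E₂ᵀ *ᵥ lE - I₂ᵀ *ᵥ lI + Zuᵀ *ᵥ lZ) ⬝ᵥ du
      + (E₂ᵀ *ᵥ lE - I₂ᵀ *ᵥ lI + Zvᵀ *ᵥ lZ) ⬝ᵥ dv := by
  have hE' := congrArg (lE ⬝ᵥ ·) hE
  have hZ' := congrArg (lZ ⬝ᵥ ·) hZ
  have hstat' := congrArg (· ⬝ᵥ dt) hstat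
  simp only [mulVec_add, dotProduct_add, add_dotProduct, sub_dotProduct,
    dotProduct_zero, zero_dotProduct, mulVec_transpose, ← dotProduct_mulVec] at hE' hZ' hstat' ⊢
  linarith

theorem stmt12_general {n s m₁ m₂ : ℕ}
    (f' : Fin n → ℝ)
    (E₁ : Matrix (Fin m₁) (Fin n) ℝ) (E₂ : Matrix (Fin m₁) (Fin s) ℝ)
    (I₁ : Matrix (Fin m₂) (Fin n) ℝ) (I₂ : Matrix (Fin m₂) (Fin s) ℝ)
    (Z₁ : Matrix (Fin s) (Fin n) ℝ) (Z₂ : Matrix (Fin s) (Fin s) ℝ)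
    (c : Fin m₂ → ℝ) (hc : ∀ j, 0 ≤ c j)
    (U V D : Set (Fin s))
    (hpart : ∀ i, (i ∈ U ∧ i ∉ V ∧ i ∉ D) ∨ (i ∉ U ∧ i ∈ V ∧ i ∉ D) ∨
      (i ∉ U ∧ i ∉ V ∧ i ∈ D))
    (lE : Fin m₁ → ℝ) (lI : Fin m₂ → ℝ) (lZ : Fin s → ℝ) (μu μv : Fin s → ℝ)
    -- S-stationarity
    (hstat : f' + E₁ᵀ *ᵥ lE - I₁ᵀ *ᵥ lI + Z₁ᵀ *ᵥ lZ = 0)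
    (hμu : μu = E₂ᵀ *ᵥ lE - I₂ᵀ *ᵥ lI + (Z₂ - 1)ᵀ *ᵥ lZ)
    (hμv : μv = E₂ᵀ *ᵥ lE - I₂ᵀ *ᵥ lI + (Z₂ + 1)ᵀ *ᵥ lZ)
    (hμU : ∀ i ∈ U, μu i = 0)
    (hμV : ∀ i ∈ V, μv i = 0)
    (hlI : ∀ j, 0 ≤ lI j)
    (hlIc : lI ⬝ᵥ c = 0)
    -- strict complementarity
    (hsc1 : ∀ j, c j = 0 → 0 < lI j)
    (hsc2 : ∀ i ∈ D, 0 < μu i ∧ 0 < μv i)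
    (dt : Fin n → ℝ) (du dv : Fin s → ℝ) :
    -- critical direction
    ((∀ i ∈ D, min (du i) (dv i) = 0) ∧
      (∀ i ∈ V, du i = 0) ∧
      (∀ i ∈ U, dv i = 0) ∧
      (∀ j, c j = 0 → 0 ≤ (I₁ *ᵥ dt + I₂ *ᵥ (du + dv)) j) ∧
      E₁ *ᵥ dt + E₂ *ᵥ (du + dv) = 0 ∧
      Z₁ *ᵥ dt + (Z₂ - 1) *ᵥ du + (Z₂ + 1) *ᵥ dv = 0 ∧
      f' ⬝ᵥ dt = 0)
    ↔
    -- kernel of the tightened Jacobian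
    (E₁ *ᵥ dt + E₂ *ᵥ (du + dv) = 0 ∧
      (∀ j, c j = 0 → (I₁ *ᵥ dt + I₂ *ᵥ (du + dv)) j = 0) ∧
      Z₁ *ᵥ dt + (Z₂ - 1) *ᵥ du + (Z₂ + 1) *ᵥ dv = 0 ∧
      (∀ i, i ∈ V ∨ i ∈ D → du i = 0) ∧
      (∀ i, i ∈ U ∨ i ∈ D → dv i = 0)) := by
  set q := I₁ *ᵥ dt + I₂ *ᵥ (du + dv)
  have hq_off : ∀ j ∉ {j | c j = 0}, lI j * q j = 0 := fun j hj => by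
    rw [eq_zero_of_dotProduct_eq_zero_of_nonneg hlI hc hlIc hj, zero_mul]
  have hUV : ∀ i ∉ D, i ∈ U ∨ i ∈ V := by
    intro i hi
    rcases hpart i with h | h | h <;> tauto
  have hdu_off (hV : ∀ i ∈ V, du i = 0) : ∀ i ∉ D, μu i * du i = 0 := fun i hi =>
    (hUV i hi).elim (fun h => by rw [hμU i h, zero_mul]) (fun h => by rw [hV i h, mul_zero])
  have hdv_off (hU : ∀ i ∈ U, dv i = 0) : ∀ i ∉ D, μv i * dv i = 0 := fun i hi =>
    (hUV i hi).elim (fun h => by rw [hU i h, mul_zero]) (fun h => by rw [hμV i h, zero_mul])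
  have hcrit (hmin : ∀ i ∈ D, min (du i) (dv i) = 0) (hV : ∀ i ∈ V, du i = 0)
      (hU : ∀ i ∈ U, dv i = 0) (hA : ∀ j, c j = 0 → 0 ≤ q j)
      (hE : E₁ *ᵥ dt + E₂ *ᵥ (du + dv) = 0)
      (hZ : Z₁ *ᵥ dt + (Z₂ - 1) *ᵥ du + (Z₂ + 1) *ᵥ dv = 0) :
      f' ⬝ᵥ dt = 0 ↔ (∀ j, c j = 0 → q j = 0) ∧ (∀ i ∈ D, du i = 0) ∧ ∀ i ∈ D, dv i = 0 := by
    have hduD : ∀ i ∈ D, 0 ≤ du i := fun i hi => hmin i hi ▸ min_le_left _ _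
    have hdvD : ∀ i ∈ D, 0 ≤ dv i := fun i hi => hmin i hi ▸ min_le_right _ _
    have hq := dotProduct_nonneg_of_mul_eq_zero_off hq_off (fun j hj => (hsc1 j hj).le) hA
    have hu := dotProduct_nonneg_of_mul_eq_zero_off (hdu_off hV) (fun i hi => (hsc2 i hi).1.le) hduD
    have hv := dotProduct_nonneg_of_mul_eq_zero_off (hdv_off hU) (fun i hi => (hsc2 i hi).2.le) hdvD
    rw [dotProduct_eq_of_stationary hstat hE hZ, ← hμu, ← hμv,
      add_eq_zero_iff_of_nonneg (add_nonneg hq hu) hv, add_eq_zero_iff_of_nonneg hq hu, and_assoc]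
    exact and_congr (dotProduct_eq_zero_iff_of_mul_eq_zero_off hq_off hsc1 hA) <| and_congr
      (dotProduct_eq_zero_iff_of_mul_eq_zero_off (hdu_off hV) (fun i hi => (hsc2 i hi).1) hduD)
      (dotProduct_eq_zero_iff_of_mul_eq_zero_off (hdv_off hU) (fun i hi => (hsc2 i hi).2) hdvD)
  constructor
  · rintro ⟨hmin, hV, hU, hA, hE, hZ, hf⟩
    obtain ⟨hqA, hduD, hdvD⟩ := (hcrit hmin hV hU hA hE hZ).1 hf
    exact ⟨hE, hqA, hZ, fun i hi => hi.elim (hV i) (hduD i), fun i hi => hi.elim (hU i) (hdvD i)⟩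
  · rintro ⟨hE, hA, hZ, hdu, hdv⟩
    have hmin : ∀ i ∈ D, min (du i) (dv i) = 0 := fun i hi => by
      rw [hdu i (.inr hi), hdv i (.inr hi), min_self]
    have hV : ∀ i ∈ V, du i = 0 := fun i hi => hdu i (.inl hi)
    have hU : ∀ i ∈ U, dv i = 0 := fun i hi => hdv i (.inl hi)
    have hA' : ∀ j, c j = 0 → 0 ≤ q j := fun j hj => (hA j hj).ge
    exact ⟨hmin, hV, hU, hA', hE, hZ, (hcrit hmin hV hU hA' hE hZ).2
      ⟨hA, fun i hi => hdu i (.inr hi), fun i hi => hdv i (.inr hi)⟩⟩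

/-- Under S-stationarity with strict complementarity, the set of critical directions
coincides with the kernel of the tightened Jacobian. -/
theorem stmt12 {n s m₁ m₂ : ℕ}
    (f' : Fin n → ℝ)
    (E₁ : Matrix (Fin m₁) (Fin n) ℝ) (E₂ : Matrix (Fin m₁) (Fin s) ℝ)
    (I₁ : Matrix (Fin m₂) (Fin n) ℝ) (I₂ : Matrix (Fin m₂) (Fin s) ℝ)
    (Z₁ : Matrix (Fin s) (Fin n) ℝ) (Z₂ : Matrix (Fin s) (Fin s) ℝ)
    (c : Fin m₂ → ℝ) (hc : ∀ j, 0 ≤ c j)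
    (U V D : Set (Fin s))
    (hpart : ∀ i, (i ∈ U ∧ i ∉ V ∧ i ∉ D) ∨ (i ∉ U ∧ i ∈ V ∧ i ∉ D) ∨
      (i ∉ U ∧ i ∉ V ∧ i ∈ D))
    (lE : Fin m₁ → ℝ) (lI : Fin m₂ → ℝ) (lZ : Fin s → ℝ) (μu μv : Fin s → ℝ)
    -- S-stationarity
    (hstat : f' + E₁ᵀ *ᵥ lE - I₁ᵀ *ᵥ lI + Z₁ᵀ *ᵥ lZ = 0)
    (hμu : μu = E₂ᵀ *ᵥ lE - I₂ᵀ *ᵥ lI + (Z₂ - 1)ᵀ *ᵥ lZ)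
    (hμv : μv = E₂ᵀ *ᵥ lE - I₂ᵀ *ᵥ lI + (Z₂ + 1)ᵀ *ᵥ lZ)
    (hμD : ∀ i ∈ D, 0 ≤ μu i ∧ 0 ≤ μv i)
    (hμU : ∀ i ∈ U, μu i = 0)
    (hμV : ∀ i ∈ V, μv i = 0)
    (hlI : ∀ j, 0 ≤ lI j)
    (hlIc : lI ⬝ᵥ c = 0)
    -- strict complementarity
    (hsc1 : ∀ j, c j = 0 → 0 < lI j)
    (hsc2 : ∀ i ∈ D, 0 < μu i ∧ 0 < μv i)
    (dt : Fin n → ℝ) (du dv : Fin s → ℝ) :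
    -- critical direction
    ((∀ i ∈ D, min (du i) (dv i) = 0) ∧
      (∀ i ∈ V, du i = 0) ∧
      (∀ i ∈ U, dv i = 0) ∧
      (∀ j, c j = 0 → 0 ≤ (I₁ *ᵥ dt + I₂ *ᵥ (du + dv)) j) ∧
      E₁ *ᵥ dt + E₂ *ᵥ (du + dv) = 0 ∧
      Z₁ *ᵥ dt + (Z₂ - 1) *ᵥ du + (Z₂ + 1) *ᵥ dv = 0 ∧
      f' ⬝ᵥ dt = 0)
    ↔
    -- kernel of the tightened Jacobian
    (E₁ *ᵥ dt + E₂ *ᵥ (du + dv) = 0 ∧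
      (∀ j, c j = 0 → (I₁ *ᵥ dt + I₂ *ᵥ (du + dv)) j = 0) ∧
      Z₁ *ᵥ dt + (Z₂ - 1) *ᵥ du + (Z₂ + 1) *ᵥ dv = 0 ∧
      (∀ i, i ∈ V ∨ i ∈ D → du i = 0) ∧
      (∀ i, i ∈ U ∨ i ∈ D → dv i = 0)) :=
  stmt12_general f' E₁ E₂ I₁ I₂ Z₁ Z₂ c hc U V D hpart lE lI lZ μu μv hstat hμu hμv hμU hμV hlI hlIc
    hsc1 hsc2 dt du dv
end

section
/- Let D^t ⊆ ℝ^n be open and D^z ⊆ ℝ^s be open and symmetric under componentwise sign changes. Let f : D^t → ℝ and cE : D^t × D^z → ℝ^{m₁}, cI : D^t × D^z → ℝ^{m₂}, cZ : D^t × D^z → ℝ^s be twice continuously differentiable. Let y* = (t*, u*, v*) be feasible for the counterpart MPCC (t* ∈ D^t, u*+v* ∈ D^z, u*, v* ≥ 0, u*ᵢv*ᵢ = 0, cE(t*,u*+v*) = 0, cI(t*,u*+v*) ≥ 0, cZ(t*,u*+v*) = u*−v*) and a local minimizer of (t,u,v) ↦ f(t) over the MPCC feasible set F_mpcc = {(t,u,v)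 : t ∈ D^t, u+v ∈ D^z, u,v ≥ 0, uᵢvᵢ = 0 ∀i, cE(t,u+v) = 0, cI(t,u+v) ≥ 0, cZ(t,u+v) = u−v}. Set U₊ = {i : u*ᵢ > 0}, V₊ = {i : v*ᵢ > 0}, D = {i : u*ᵢ = v*ᵢ = 0}, A = {i : cIᵢ(t*,u*+v*) = 0}. Assume MPCC-LICQ holds at y* (full row rank of [[∂₁cE*, ∂₂cE*P_{U₊}ᵀ, ∂₂cE*P_{V₊}ᵀ], [P_A∂₁cI*, P_A∂₂cI*P_{U₊}ᵀ, P_A∂₂cI*P_{V₊}ᵀ], [∂₁cZ*, (∂₂cZ*−I)P_{U₊}ᵀ, (∂₂cZ*+I)P_{V₊}ᵀ]], derivatives evaluated at (t*,u*+v*)), let (λ_E, λ_I, λ_Z, μᵘ, μᵛ) be multipliers satisfying the S-stationarity conditions at y*, and assume MPCC-strict complementarity: (λ_I)ᵢ > 0 for i ∈ A and μᵘᵢ > 0, μᵛᵢ > 0 for i ∈ D. Define Lc(t,u,v) = f(t) + λ_Eᵀ cE(t,u+v) − λ_Iᵀ cI(t,u+v) + λ_Zᵀ(cZ(t,u+v)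 − (u−v)). Then for every d = (d_t,d_u,d_v) satisfying ∂₁cE* d_t + ∂₂cE*(d_u+d_v) = 0, P_A(∂₁cI* d_t + ∂₂cI*(d_u+d_v)) = 0, ∂₁cZ* d_t + (∂₂cZ*−I)d_u + (∂₂cZ*+I)d_v = 0, d_{u,i} = 0 for i ∈ V₊ ∪ D, and d_{v,i} = 0 for i ∈ U₊ ∪ D, the Hessian quadratic form satisfies dᵀ ∇²Lc(y*) d ≥ 0, where ∇²Lc(y*) is the second derivative of Lc with respect to (t,u,v) at y*. -/
/-!
Near `y* = (t*, u*, v*)` the MPCC feasible set contains the zero set of the equality system of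
the tightened problem (`cE = 0`, the active rows of `cI` vanish, `cZ = u - v`, `uᵢ = 0` off `U₊`,
`vᵢ = 0` off `V₊`). MPCC-LICQ says exactly that this system has surjective derivative at `y*`,
and the admissible directions `d` form its kernel, so Lyusternik's theorem gives a `C²` curve in
the zero set through `y*` with velocity `d`. On the zero set, `Lc` minus its linearization
`∇Lc(y*) = (0, μᵘ, μᵛ)` (S-stationarity) equals `f`, because `λ_I` vanishes off `A` and `μᵘ`, `μᵛ`
vanish on `U₊`, `V₊`. Hence this function has a local minimum at `0` along the curve and a
critical point at `y*`, and its second derivative there is `dᵀ ∇²Lc(y*) d ≥ 0`.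
-/

open Matrix
open scoped Classical

noncomputable section

/-- Selection matrix `P_S` whose rows are the unit row vectors `eᵢᵀ`, `i ∈ S`. -/
def sel {k : ℕ} (p : Fin k → Prop) : Matrix {i // p i} (Fin k) ℝ :=
  Matrix.of fun i j => if (i : Fin k) = j then 1 else 0

/-- Partial Jacobian with respect to the first argument. -/
def jac1 {n s m : ℕ} (c : (Fin n → ℝ) × (Fin s → ℝ) → Fin m → ℝ)
    (p : (Fin n → ℝ) × (Fin s → ℝ)) : Matrix (Fin m) (Fin n) ℝ :=
  Matrix.of fun i j => fderiv ℝ c p (Pi.single j 1, 0) i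

/-- Partial Jacobian with respect to the second argument. -/
def jac2 {n s m : ℕ} (c : (Fin n → ℝ) × (Fin s → ℝ) → Fin m → ℝ)
    (p : (Fin n → ℝ) × (Fin s → ℝ)) : Matrix (Fin m) (Fin s) ℝ :=
  Matrix.of fun i j => fderiv ℝ c p (0, Pi.single j 1) i

/-- The MPCC-Lagrangian `Lc(t,u,v) = f(t) + λ_Eᵀ cE − λ_Iᵀ cI + λ_Zᵀ(cZ − (u − v))`. -/
def Lc {n s m₁ m₂ : ℕ} (f : (Fin n → ℝ) → ℝ)
    (cE : (Fin n → ℝ) × (Fin s → ℝ) → Fin m₁ → ℝ)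
    (cI : (Fin n → ℝ) × (Fin s → ℝ) → Fin m₂ → ℝ)
    (cZ : (Fin n → ℝ) × (Fin s → ℝ) → Fin s → ℝ)
    (lE : Fin m₁ → ℝ) (lI : Fin m₂ → ℝ) (lZ : Fin s → ℝ) :
    (Fin n → ℝ) × (Fin s → ℝ) × (Fin s → ℝ) → ℝ := fun y =>
  f y.1 + lE ⬝ᵥ cE (y.1, y.2.1 + y.2.2) - lI ⬝ᵥ cI (y.1, y.2.1 + y.2.2) +
    lZ ⬝ᵥ (cZ (y.1, y.2.1 + y.2.2) - (y.2.1 - y.2.2))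

open Filter Topology

section Calculus

variable {E F : Type*} [NormedAddCommGroup E] [NormedSpace ℝ E]
  [NormedAddCommGroup F] [NormedSpace ℝ F]

/-- A negative second derivative would make `x` a local maximum as well (second derivative test),
so `f` would be locally constant and `deriv (deriv f) x = 0`. -/
theorem IsLocalMin.deriv_deriv_nonneg {f : ℝ → ℝ} {x : ℝ} (h : IsLocalMin f x)
    (hc : ContinuousAt f x) : 0 ≤ deriv (deriv f) x := by
  by_contra! hneg
  have hmax := isLocalMax_of_deriv_deriv_neg hneg h.deriv_eq_zero hc
  have hconst : f =ᶠ[𝓝 x] fun _ => f x := (h.and hmax).mono fun y hy => le_antisymm hy.2 hy.1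
  have hderiv : deriv f =ᶠ[𝓝 x] fun _ => 0 :=
    hconst.eventuallyEq_nhds.mono fun y hy => by rw [hy.deriv_eq, deriv_const]
  rw [hderiv.deriv_eq, deriv_const] at hneg
  exact lt_irrefl _ hneg

theorem deriv_deriv_comp_of_contDiffAt {L : E → F} {γ : ℝ → E} {t : ℝ}
    (hL : ContDiffAt ℝ 2 L (γ t)) (hγ : ContDiffAt ℝ 2 γ t) :
    deriv (deriv (L ∘ γ)) t = fderiv ℝ (fderiv ℝ L) (γ t) (deriv γ t) (deriv γ t) +
      fderiv ℝ L (γ t) (deriv (deriv γ) t) := by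
  have hL_near : ∀ᶠ τ in 𝓝 t, DifferentiableAt ℝ L (γ τ) :=
    hγ.continuousAt.eventually ((hL.eventually (by simp)).mono fun y hy =>
      hy.differentiableAt (by simp))
  have hγ_near : ∀ᶠ τ in 𝓝 t, DifferentiableAt ℝ γ τ :=
    (hγ.eventually (by simp)).mono fun τ hτ => hτ.differentiableAt (by simp)
  have hderiv : deriv (L ∘ γ) =ᶠ[𝓝 t] fun τ => fderiv ℝ L (γ τ) (deriv γ τ) := by
    filter_upwards [hL_near, hγ_near] with τ hLτ hγτ
    exact (hLτ.hasFDerivAt.comp_hasDerivAt τ hγτ.hasDerivAt).deriv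
  have hL' : HasFDerivAt (fderiv ℝ L) (fderiv ℝ (fderiv ℝ L) (γ t)) (γ t) :=
    ((hL.fderiv_right (m := 1) le_rfl).differentiableAt one_ne_zero).hasFDerivAt
  have hγ' : ContDiffAt ℝ 1 (deriv γ) t :=
    (hγ.fderiv_right (m := 1) le_rfl).clm_apply (contDiffAt_const (c := (1 : ℝ)))
  rw [hderiv.deriv_eq]
  exact ((hL'.comp_hasDerivAt t (hγ.differentiableAt (by simp)).hasDerivAt).clm_apply
    (hγ'.differentiableAt one_ne_zero).hasDerivAt).deriv

/-- Lyusternik's theorem along a single tangent vector: the implicit function of `G`, evaluated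
on the line `τ ↦ τ • d` of its kernel coordinates, is the required curve. -/
theorem ContDiffAt.exists_curve_tangent_mem_fiber [CompleteSpace E] [FiniteDimensional ℝ F]
    {G : E → F} {x d : E} {k : WithTop ℕ∞} (hG : ContDiffAt ℝ k G x) (hk : k ≠ 0)
    (hsurj : (fderiv ℝ G x).range = ⊤) (hd : fderiv ℝ G x d = 0) :
    ∃ γ : ℝ → E, ContDiffAt ℝ k γ 0 ∧ γ 0 = x ∧ HasDerivAt γ d 0 ∧
      ∀ᶠ τ in 𝓝 0, G (γ τ) = G x := by
  have hs := hG.hasStrictFDerivAt hk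
  set dK : (fderiv ℝ G x).ker := ⟨d, hd⟩
  set ψ := hs.implicitFunction G (fderiv ℝ G x) hsurj
  have hline : Tendsto (fun τ : ℝ => (G x, τ • dK)) (𝓝 0) (𝓝 (G x, 0)) :=
    tendsto_const_nhds.prodMk_nhds
      ((continuous_id.smul continuous_const).tendsto' (0 : ℝ) 0 (zero_smul ℝ dK))
  refine ⟨fun τ => ψ (G x) (τ • dK), ?_, by simp [ψ], ?_,
    hline.eventually (hs.map_implicitFunction_eq hsurj)⟩
  · set φ := hs.implicitFunctionDataOfComplemented G (fderiv ℝ G x) hsurj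
      (fderiv ℝ G x).ker_closedComplemented_of_finiteDimensional_range
    have hright : ContDiffAt ℝ k φ.rightFun φ.pt := by
      simp only [φ, HasStrictFDerivAt.implicitFunctionDataOfComplemented]
      fun_prop
    have hψ := φ.contDiffAt_implicitFunction hG hright hk
    have hpt : φ.prodFun φ.pt = (G x, (0 : ℝ) • dK) := by simp [φ]
    rw [hpt] at hψ
    change ContDiffAt ℝ k (φ.implicitFunction.uncurry ∘ fun τ : ℝ => (G x, τ • dK)) 0
    exact hψ.comp 0 (by fun_prop)
  · have := (hs.to_implicitFunction hsurj).hasFDerivAt.comp_hasDerivAt_of_eq (0 : ℝ)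
      ((hasDerivAt_id (0 : ℝ)).smul_const dK) (zero_smul ℝ dK).symm
    simpa [Function.comp_def, dK] using this

theorem IsLocalMinOn.fderiv_fderiv_nonneg_of_mem_ker [CompleteSpace E] [FiniteDimensional ℝ F]
    {L : E → ℝ} {G : E → F} {x d : E} (hmin : IsLocalMinOn L {y | G y = G x} x)
    (hL : ContDiffAt ℝ 2 L x) (hcrit : fderiv ℝ L x = 0) (hG : ContDiffAt ℝ 2 G x)
    (hsurj : (fderiv ℝ G x).range = ⊤) (hd : fderiv ℝ G x d = 0) :
    0 ≤ fderiv ℝ (fderiv ℝ L) x d d := by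
  obtain ⟨γ, hγ, hγ0, hγd, hγG⟩ := hG.exists_curve_tangent_mem_fiber two_ne_zero hsurj hd
  have hγ_tendsto : Tendsto γ (𝓝 0) (𝓝[{y | G y = G x}] x) :=
    tendsto_nhdsWithin_iff.2 ⟨hγ0 ▸ hγ.continuousAt.tendsto, hγG⟩
  have hmin' : IsLocalMin (L ∘ γ) 0 := IsMinFilter.comp_tendsto (hγ0 ▸ hmin) hγ_tendsto
  have := hmin'.deriv_deriv_nonneg ((hγ0 ▸ hL.continuousAt).comp hγ.continuousAt)
  rwa [deriv_deriv_comp_of_contDiffAt (hγ0 ▸ hL) hγ, hγ0, hcrit, hγd.deriv, _root_.zero_apply,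
    add_zero] at this

theorem fderiv_fderiv_sub_clm {L : E → F} {x : E} (ℓ : E →L[ℝ] F)
    (hL : ∀ᶠ y in 𝓝 x, DifferentiableAt ℝ L y) :
    fderiv ℝ (fderiv ℝ fun y => L y - ℓ y) x = fderiv ℝ (fderiv ℝ L) x := by
  have : fderiv ℝ (fun y => L y - ℓ y) =ᶠ[𝓝 x] fun y => fderiv ℝ L y - ℓ := by
    filter_upwards [hL] with y hy
    rw [fderiv_fun_sub hy ℓ.differentiableAt, ℓ.fderiv]
  rw [this.fderiv_eq, fderiv_sub_const]

theorem HasFDerivAt.const_dotProduct {ι : Type*} [Fintype ι] {c : E → ι → ℝ}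
    {c' : E →L[ℝ] ι → ℝ} {y : E} (l : ι → ℝ) (h : HasFDerivAt c c' y) :
    HasFDerivAt (fun y => l ⬝ᵥ c y) (∑ i, l i • (ContinuousLinearMap.proj i).comp c') y :=
  HasFDerivAt.fun_sum fun i _ => (hasFDerivAt_pi'.1 h i).const_mul (l i)

theorem ContinuousAt.eventually_forall_pos_of_pos {X ι : Type*} [TopologicalSpace X] [Finite ι]
    {g : X → ι → ℝ} {x : X} (hg : ContinuousAt g x) :
    ∀ᶠ y in 𝓝 x, ∀ i, 0 < g x i → 0 < g y i := by
  refine eventually_all.2 fun i => ?_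
  by_cases hi : 0 < g x i
  · exact (((continuous_apply i).continuousAt.tendsto.comp hg).eventually_const_lt hi).mono
      fun _ hy _ => hy
  · exact Eventually.of_forall fun _ h => absurd h hi

end Calculus

section LinearAlgebra

theorem LinearMap.surjective_of_surjective_snd {R M N₁ N₂ : Type*} [Ring R] [AddCommGroup M]
    [Module R M] [AddCommGroup N₁] [Module R N₁] [AddCommGroup N₂] [Module R N₂]
    (T : M →ₗ[R] N₁ × N₂) (h₂ : Function.Surjective fun x => (T x).2)
    (h₁ : ∀ y, ∃ x, T x = (y, 0)) : Function.Surjective T := by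
  rintro ⟨y₁, y₂⟩
  obtain ⟨x₂, hx₂⟩ := h₂ y₂
  obtain ⟨x₁, hx₁⟩ := h₁ (y₁ - (T x₂).1)
  refine ⟨x₁ + x₂, ?_⟩
  rw [map_add, hx₁]
  ext <;> simp [hx₂]

theorem Matrix.mulVec_surjective_of_rank_eq_card {K m n : Type*} [Field K] [Fintype m]
    [Fintype n] {M : Matrix m n K} (h : M.rank = Fintype.card m) :
    Function.Surjective M.mulVec := by
  have : LinearMap.range M.mulVecLin = ⊤ :=
    Submodule.eq_top_of_finrank_eq (by rw [← Matrix.rank, h, Module.finrank_fintype_fun_eq_card])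
  exact LinearMap.range_eq_top.1 this

theorem sel_mulVec {k : ℕ} (p : Fin k → Prop) (x : Fin k → ℝ) (j : {i // p i}) :
    (sel p *ᵥ x) j = x j := by
  simp [sel, Matrix.mulVec, dotProduct]

theorem sel_transpose_mulVec_apply_of_not {k : ℕ} {p : Fin k → Prop} (x : {i // p i} → ℝ)
    {i : Fin k} (hi : ¬ p i) : ((sel p)ᵀ *ᵥ x) i = 0 := by
  simp only [Matrix.mulVec, dotProduct]
  refine Finset.sum_eq_zero fun j _ => ?_
  simp [sel, show (j : Fin k) ≠ i from fun h => hi (h ▸ j.2)]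

end LinearAlgebra

section Jacobians

variable {n s m : ℕ}

theorem jac1_mulVec (c : (Fin n → ℝ) × (Fin s → ℝ) → Fin m → ℝ) (p : (Fin n → ℝ) × (Fin s → ℝ))
    (a : Fin n → ℝ) : jac1 c p *ᵥ a = fderiv ℝ c p (a, 0) :=
  LinearMap.toMatrix'_mulVec
    ((fderiv ℝ c p).comp (ContinuousLinearMap.inl ℝ _ _) : (Fin n → ℝ) →ₗ[ℝ] Fin m → ℝ) a

theorem jac2_mulVec (c : (Fin n → ℝ) × (Fin s → ℝ) → Fin m → ℝ) (p : (Fin n → ℝ) × (Fin s → ℝ))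
    (b : Fin s → ℝ) : jac2 c p *ᵥ b = fderiv ℝ c p (0, b) :=
  LinearMap.toMatrix'_mulVec
    ((fderiv ℝ c p).comp (ContinuousLinearMap.inr ℝ _ _) : (Fin s → ℝ) →ₗ[ℝ] Fin m → ℝ) b

theorem fderiv_apply_eq_jac (c : (Fin n → ℝ) × (Fin s → ℝ) → Fin m → ℝ)
    (p : (Fin n → ℝ) × (Fin s → ℝ)) (a : Fin n → ℝ) (b : Fin s → ℝ) :
    fderiv ℝ c p (a, b) = jac1 c p *ᵥ a + jac2 c p *ᵥ b := by
  rw [jac1_mulVec, jac2_mulVec, ← map_add, Prod.mk_add_mk, add_zero, zero_add]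

theorem fderiv_apply_eq_dotProduct (f : (Fin n → ℝ) → ℝ) (t w : Fin n → ℝ) :
    fderiv ℝ f t w = (fun j => fderiv ℝ f t (Pi.single j 1)) ⬝ᵥ w := by
  conv_lhs => rw [← Finset.univ_sum_single w]
  simp only [map_sum, dotProduct]
  refine Finset.sum_congr rfl fun j _ => ?_
  rw [mul_comm, ← smul_eq_mul, ← map_smul, ← Pi.single_smul', smul_eq_mul, mul_one]

end Jacobians

section MPCC

variable {n s m₁ m₂ : ℕ} (cE : (Fin n → ℝ) × (Fin s → ℝ) → Fin m₁ → ℝ)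
  (cI : (Fin n → ℝ) × (Fin s → ℝ) → Fin m₂ → ℝ) (cZ : (Fin n → ℝ) × (Fin s → ℝ) → Fin s → ℝ)

/-- The equality constraints of the tightened problem at `(t, u, v)`, keeping only the inequalities
active there: `uᵢ = 0` for `i ∉ U₊` and `vᵢ = 0` for `i ∉ V₊`. -/
def activeMap (t : Fin n → ℝ) (u v : Fin s → ℝ) (y : (Fin n → ℝ) × (Fin s → ℝ) × (Fin s → ℝ)) :
    ((Fin m₁ → ℝ) × ({j // cI (t, u + v) j = 0} → ℝ) × (Fin s → ℝ)) ×
      (({i // ¬ 0 < u i} → ℝ) × ({i // ¬ 0 < v i} → ℝ)) :=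
  ((cE (y.1, y.2.1 + y.2.2), fun j => cI (y.1, y.2.1 + y.2.2) j,
      cZ (y.1, y.2.1 + y.2.2) - (y.2.1 - y.2.2)),
    (fun i => y.2.1 i, fun i => y.2.2 i))

def licqMatrix (t : Fin n → ℝ) (u v : Fin s → ℝ) :
    Matrix (Fin m₁ ⊕ {j // cI (t, u + v) j = 0} ⊕ Fin s)
      (Fin n ⊕ {i // 0 < u i} ⊕ {i // 0 < v i}) ℝ :=
  Matrix.fromRows
    (Matrix.fromCols (jac1 cE (t, u + v))
      (Matrix.fromCols
        (jac2 cE (t, u + v) * (sel fun i => 0 < u i)ᵀ)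
        (jac2 cE (t, u + v) * (sel fun i => 0 < v i)ᵀ)))
    (Matrix.fromRows
      (Matrix.fromCols
        (sel (fun j => cI (t, u + v) j = 0) * jac1 cI (t, u + v))
        (Matrix.fromCols
          (sel (fun j => cI (t, u + v) j = 0) * jac2 cI (t, u + v) * (sel fun i => 0 < u i)ᵀ)
          (sel (fun j => cI (t, u + v) j = 0) * jac2 cI (t, u + v) * (sel fun i => 0 < v i)ᵀ)))
      (Matrix.fromCols (jac1 cZ (t, u + v))
        (Matrix.fromCols
          ((jac2 cZ (t, u + v) - 1) * (sel fun i => 0 < u i)ᵀ)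
          ((jac2 cZ (t, u + v) + 1) * (sel fun i => 0 < v i)ᵀ))))

def mpccFeasible (Dt : Set (Fin n → ℝ)) (Dz : Set (Fin s → ℝ)) :
    Set ((Fin n → ℝ) × (Fin s → ℝ) × (Fin s → ℝ)) :=
  {q | q.1 ∈ Dt ∧ q.2.1 + q.2.2 ∈ Dz ∧ (∀ i, 0 ≤ q.2.1 i) ∧ (∀ i, 0 ≤ q.2.2 i) ∧
    (∀ i, q.2.1 i * q.2.2 i = 0) ∧ cE (q.1, q.2.1 + q.2.2) = 0 ∧
    (∀ j, 0 ≤ cI (q.1, q.2.1 + q.2.2) j) ∧ cZ (q.1, q.2.1 + q.2.2) = q.2.1 - q.2.2}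

variable {cE cI cZ} {t : Fin n → ℝ} {u v : Fin s → ℝ}

theorem contDiffAt_Lc {k : WithTop ℕ∞} {f : (Fin n → ℝ) → ℝ} (lE : Fin m₁ → ℝ)
    (lI : Fin m₂ → ℝ) (lZ : Fin s → ℝ) (hf : ContDiffAt ℝ k f t)
    (hE : ContDiffAt ℝ k cE (t, u + v)) (hI : ContDiffAt ℝ k cI (t, u + v))
    (hZ : ContDiffAt ℝ k cZ (t, u + v)) :
    ContDiffAt ℝ k (Lc f cE cI cZ lE lI lZ) (t, u, v) := by
  unfold Lc dotProduct
  fun_prop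

theorem fderiv_Lc_apply {f : (Fin n → ℝ) → ℝ} (lE : Fin m₁ → ℝ) (lI : Fin m₂ → ℝ)
    (lZ : Fin s → ℝ) (hf : DifferentiableAt ℝ f t)
    (hE : DifferentiableAt ℝ cE (t, u + v)) (hI : DifferentiableAt ℝ cI (t, u + v))
    (hZ : DifferentiableAt ℝ cZ (t, u + v)) (w : (Fin n → ℝ) × (Fin s → ℝ) × (Fin s → ℝ)) :
    fderiv ℝ (Lc f cE cI cZ lE lI lZ) (t, u, v) w =
      ((fun j => fderiv ℝ f t (Pi.single j 1)) + (jac1 cE (t, u + v))ᵀ *ᵥ lE -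
          (jac1 cI (t, u + v))ᵀ *ᵥ lI + (jac1 cZ (t, u + v))ᵀ *ᵥ lZ) ⬝ᵥ w.1 +
        ((jac2 cE (t, u + v))ᵀ *ᵥ lE - (jac2 cI (t, u + v))ᵀ *ᵥ lI +
          (jac2 cZ (t, u + v) - 1)ᵀ *ᵥ lZ) ⬝ᵥ w.2.1 +
        ((jac2 cE (t, u + v))ᵀ *ᵥ lE - (jac2 cI (t, u + v))ᵀ *ᵥ lI +
          (jac2 cZ (t, u + v) + 1)ᵀ *ᵥ lZ) ⬝ᵥ w.2.2 := by
  have hu : HasFDerivAt (fun y : (Fin n → ℝ) × (Fin s → ℝ) × (Fin s → ℝ) => y.2.1) _ (t, u, v) :=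
    (hasFDerivAt_snd (𝕜 := ℝ)).fst
  have hv : HasFDerivAt (fun y : (Fin n → ℝ) × (Fin s → ℝ) × (Fin s → ℝ) => y.2.2) _ (t, u, v) :=
    (hasFDerivAt_snd (𝕜 := ℝ)).snd
  have hφ := hasFDerivAt_fst.prodMk (hu.add hv)
  have hL : HasFDerivAt (Lc f cE cI cZ lE lI lZ) _ (t, u, v) :=
    (((hf.hasFDerivAt.comp (t, u, v) hasFDerivAt_fst).add
      ((hE.hasFDerivAt.comp (t, u, v) hφ).const_dotProduct lE)).sub
      ((hI.hasFDerivAt.comp (t, u, v) hφ).const_dotProduct lI)).add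
      (((hZ.hasFDerivAt.comp (t, u, v) hφ).sub (hu.sub hv)).const_dotProduct lZ)
  rw [hL.fderiv]
  simp only [_root_.add_apply, _root_.sub_apply, ContinuousLinearMap.comp_apply,
    _root_.sum_apply, _root_.smul_apply,
    ContinuousLinearMap.prod_apply, ContinuousLinearMap.coe_fst', ContinuousLinearMap.coe_snd',
    ContinuousLinearMap.proj_apply, smul_eq_mul, ← dotProduct.eq_1]
  rw [fderiv_apply_eq_dotProduct f t w.1, fderiv_apply_eq_jac, fderiv_apply_eq_jac,
    fderiv_apply_eq_jac]
  simp only [Matrix.dotProduct_mulVec, Matrix.mulVec_transpose, Matrix.vecMul_sub,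
    Matrix.vecMul_add, Matrix.vecMul_one, Matrix.mulVec_add, add_dotProduct, sub_dotProduct,
    dotProduct_add, dotProduct_sub]
  ring

theorem contDiffAt_activeMap {k : WithTop ℕ∞} (hE : ContDiffAt ℝ k cE (t, u + v))
    (hI : ContDiffAt ℝ k cI (t, u + v)) (hZ : ContDiffAt ℝ k cZ (t, u + v)) :
    ContDiffAt ℝ k (activeMap cE cI cZ t u v) (t, u, v) := by
  unfold activeMap
  fun_prop

theorem fderiv_activeMap_apply (hE : DifferentiableAt ℝ cE (t, u + v))
    (hI : DifferentiableAt ℝ cI (t, u + v)) (hZ : DifferentiableAt ℝ cZ (t, u + v))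
    (w : (Fin n → ℝ) × (Fin s → ℝ) × (Fin s → ℝ)) :
    fderiv ℝ (activeMap cE cI cZ t u v) (t, u, v) w =
      ((jac1 cE (t, u + v) *ᵥ w.1 + jac2 cE (t, u + v) *ᵥ (w.2.1 + w.2.2),
          fun j : {j // cI (t, u + v) j = 0} =>
            (jac1 cI (t, u + v) *ᵥ w.1 + jac2 cI (t, u + v) *ᵥ (w.2.1 + w.2.2)) j,
          jac1 cZ (t, u + v) *ᵥ w.1 + jac2 cZ (t, u + v) *ᵥ (w.2.1 + w.2.2) - (w.2.1 - w.2.2)),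
        (fun i : {i // ¬ 0 < u i} => w.2.1 i, fun i : {i // ¬ 0 < v i} => w.2.2 i)) := by
  have hu : HasFDerivAt (fun y : (Fin n → ℝ) × (Fin s → ℝ) × (Fin s → ℝ) => y.2.1) _ (t, u, v) :=
    (hasFDerivAt_snd (𝕜 := ℝ)).fst
  have hv : HasFDerivAt (fun y : (Fin n → ℝ) × (Fin s → ℝ) × (Fin s → ℝ) => y.2.2) _ (t, u, v) :=
    (hasFDerivAt_snd (𝕜 := ℝ)).snd
  have hφ := hasFDerivAt_fst.prodMk (hu.add hv)
  have hG : HasFDerivAt (activeMap cE cI cZ t u v) _ (t, u, v) :=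
    ((hE.hasFDerivAt.comp (t, u, v) hφ).prodMk
      ((hasFDerivAt_pi.2 fun j : {j // cI (t, u + v) j = 0} =>
          hasFDerivAt_pi'.1 (hI.hasFDerivAt.comp (t, u, v) hφ) j.1).prodMk
        ((hZ.hasFDerivAt.comp (t, u, v) hφ).sub (hu.sub hv)))).prodMk
      ((hasFDerivAt_pi.2 fun i : {i // ¬ 0 < u i} => hasFDerivAt_pi'.1 hu i.1).prodMk
        (hasFDerivAt_pi.2 fun i : {i // ¬ 0 < v i} => hasFDerivAt_pi'.1 hv i.1))
  rw [hG.fderiv]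
  simp [fderiv_apply_eq_jac]

theorem licqMatrix_mulVec (ξ : Fin n ⊕ {i // 0 < u i} ⊕ {i // 0 < v i} → ℝ) :
    licqMatrix cE cI cZ t u v *ᵥ ξ =
      let dt := ξ ∘ Sum.inl
      let du := (sel fun i => 0 < u i)ᵀ *ᵥ (ξ ∘ Sum.inr ∘ Sum.inl)
      let dv := (sel fun i => 0 < v i)ᵀ *ᵥ (ξ ∘ Sum.inr ∘ Sum.inr)
      Sum.elim (jac1 cE (t, u + v) *ᵥ dt + jac2 cE (t, u + v) *ᵥ (du + dv))
        (Sum.elim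
          (fun j : {j // cI (t, u + v) j = 0} =>
            (jac1 cI (t, u + v) *ᵥ dt + jac2 cI (t, u + v) *ᵥ (du + dv)) j)
          (jac1 cZ (t, u + v) *ᵥ dt + jac2 cZ (t, u + v) *ᵥ (du + dv) - (du - dv))) := by
  simp only [licqMatrix, Matrix.fromRows_mulVec, Matrix.fromCols_mulVec, Matrix.mul_assoc,
    ← Matrix.mulVec_mulVec, Matrix.sub_mulVec, Matrix.add_mulVec, Matrix.one_mulVec,
    Matrix.mulVec_add, Function.comp_assoc]
  congr 2
  · funext j
    simp only [Pi.add_apply, sel_mulVec]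
  · abel

/-- MPCC-LICQ is exactly surjectivity of the derivative of the active constraint map: on the
directions supported on `U₊` and `V₊` it acts by the LICQ matrix, and the remaining coordinates
of `u` and `v` are free. -/
theorem range_fderiv_activeMap_eq_top (hE : DifferentiableAt ℝ cE (t, u + v))
    (hI : DifferentiableAt ℝ cI (t, u + v)) (hZ : DifferentiableAt ℝ cZ (t, u + v))
    (hLICQ : (licqMatrix cE cI cZ t u v).rank = m₁ + Fintype.card {j // cI (t, u + v) j = 0} + s) :
    (fderiv ℝ (activeMap cE cI cZ t u v) (t, u, v)).range = ⊤ := by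
  refine LinearMap.range_eq_top.2 (LinearMap.surjective_of_surjective_snd _ ?_ ?_)
  · rintro ⟨p, q⟩
    refine ⟨(0, Function.extend Subtype.val p 0, Function.extend Subtype.val q 0), ?_⟩
    simp [fderiv_activeMap_apply hE hI hZ]
  · rintro ⟨e, a, z⟩
    obtain ⟨ξ, hξ⟩ := Matrix.mulVec_surjective_of_rank_eq_card
      (hLICQ.trans (by simp [add_assoc])) (Sum.elim e (Sum.elim a z))
    simp only [licqMatrix_mulVec, Sum.elim_eq_iff] at hξ
    obtain ⟨rfl, rfl, rfl⟩ := hξ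
    refine ⟨(ξ ∘ Sum.inl, (sel fun i => 0 < u i)ᵀ *ᵥ (ξ ∘ Sum.inr ∘ Sum.inl),
      (sel fun i => 0 < v i)ᵀ *ᵥ (ξ ∘ Sum.inr ∘ Sum.inr)), ?_⟩
    rw [ContinuousLinearMap.coe_coe, fderiv_activeMap_apply hE hI hZ]
    refine Prod.ext rfl (Prod.ext ?_ ?_) <;> funext i
    exacts [sel_transpose_mulVec_apply_of_not (p := fun i => 0 < u i) _ i.2,
      sel_transpose_mulVec_apply_of_not (p := fun i => 0 < v i) _ i.2]

theorem activeMap_self_eq_zero (hu : ∀ i, 0 ≤ u i) (hv : ∀ i, 0 ≤ v i)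
    (hfeasE : cE (t, u + v) = 0) (hfeasZ : cZ (t, u + v) = u - v) :
    activeMap cE cI cZ t u v (t, u, v) = 0 := by
  simp only [activeMap, hfeasE, hfeasZ, sub_self, Prod.mk_eq_zero]
  exact ⟨⟨trivial, funext fun j => j.2, trivial⟩, funext fun i => (not_lt.1 i.2).antisymm (hu i),
    funext fun i => (not_lt.1 i.2).antisymm (hv i)⟩

theorem fderiv_activeMap_apply_eq_zero (hu : ∀ i, 0 ≤ u i) (hv : ∀ i, 0 ≤ v i)
    (hE : DifferentiableAt ℝ cE (t, u + v)) (hI : DifferentiableAt ℝ cI (t, u + v))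
    (hZ : DifferentiableAt ℝ cZ (t, u + v)) {dt : Fin n → ℝ} {du dv : Fin s → ℝ}
    (hdE : jac1 cE (t, u + v) *ᵥ dt + jac2 cE (t, u + v) *ᵥ (du + dv) = 0)
    (hdI : ∀ j, cI (t, u + v) j = 0 →
      (jac1 cI (t, u + v) *ᵥ dt + jac2 cI (t, u + v) *ᵥ (du + dv)) j = 0)
    (hdZ : jac1 cZ (t, u + v) *ᵥ dt + (jac2 cZ (t, u + v) - 1) *ᵥ du +
      (jac2 cZ (t, u + v) + 1) *ᵥ dv = 0)
    (hdu : ∀ i, 0 < v i ∨ (u i = 0 ∧ v i = 0) → du i = 0)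
    (hdv : ∀ i, 0 < u i ∨ (u i = 0 ∧ v i = 0) → dv i = 0) :
    fderiv ℝ (activeMap cE cI cZ t u v) (t, u, v) (dt, du, dv) = 0 := by
  rw [fderiv_activeMap_apply hE hI hZ]
  simp only [Prod.mk_eq_zero]
  refine ⟨⟨hdE, funext fun j => hdI j j.2, ?_⟩, funext fun i => hdu i ?_, funext fun i => hdv i ?_⟩
  · rw [← hdZ]
    simp only [Matrix.sub_mulVec, Matrix.add_mulVec, Matrix.one_mulVec, Matrix.mulVec_add]
    abel
  · have hui := (not_lt.1 i.2).antisymm (hu i)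
    exact (hv i).lt_or_eq.imp id fun h => ⟨hui, h.symm⟩
  · have hvi := (not_lt.1 i.2).antisymm (hv i)
    exact (hu i).lt_or_eq.imp id fun h => ⟨h.symm, hvi⟩

theorem eventually_mem_mpccFeasible {Dt : Set (Fin n → ℝ)} {Dz : Set (Fin s → ℝ)}
    (hDt : IsOpen Dt) (hDz : IsOpen Dz) (ht : t ∈ Dt) (huv : u + v ∈ Dz)
    (hcompl : ∀ i, u i * v i = 0) (hfeasI : ∀ j, 0 ≤ cI (t, u + v) j)
    (hI : ContinuousAt cI (t, u + v)) :
    ∀ᶠ y in 𝓝 (t, u, v), activeMap cE cI cZ t u v y = 0 → y ∈ mpccFeasible cE cI cZ Dt Dz := by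
  have hφ : ContinuousAt (fun y : (Fin n → ℝ) × (Fin s → ℝ) × (Fin s → ℝ) =>
      (y.1, y.2.1 + y.2.2)) (t, u, v) := by fun_prop
  have hD : ∀ᶠ y in 𝓝 (t, u, v), (y.1, y.2.1 + y.2.2) ∈ Dt ×ˢ Dz :=
    hφ.eventually ((hDt.prod hDz).mem_nhds ⟨ht, huv⟩)
  have hU := (continuous_fst.comp continuous_snd).continuousAt.eventually_forall_pos_of_pos
    (x := (t, u, v))
  have hV := (continuous_snd.comp continuous_snd).continuousAt.eventually_forall_pos_of_pos
    (x := (t, u, v))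
  have hI' := (ContinuousAt.comp (x := (t, u, v)) hI hφ).eventually_forall_pos_of_pos
  filter_upwards [hD, hU, hV, hI'] with y ⟨hyt, hyz⟩ hyu hyv hyI hy
  simp only [activeMap, Prod.mk_eq_zero, funext_iff, Pi.zero_apply, Subtype.forall,
    sub_eq_zero] at hy
  obtain ⟨⟨hyE, hyA, hyZ⟩, hyu0, hyv0⟩ := hy
  refine ⟨hyt, hyz, fun i => ?_, fun i => ?_, fun i => ?_, funext hyE, fun j => ?_, funext hyZ⟩
  · by_cases hi : 0 < u i
    exacts [(hyu i hi).le, (hyu0 i hi).ge]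
  · by_cases hi : 0 < v i
    exacts [(hyv i hi).le, (hyv0 i hi).ge]
  · by_cases hi : 0 < u i
    · have hvi : ¬ 0 < v i := fun hvi => (mul_pos hi hvi).ne' (hcompl i)
      rw [hyv0 i hvi, mul_zero]
    · rw [hyu0 i hi, zero_mul]
  · by_cases hj : cI (t, u + v) j = 0
    exacts [(hyA j hj).ge, (hyI j ((hfeasI j).lt_of_ne' hj)).le]

theorem Lc_eq_of_activeMap_eq_zero {f : (Fin n → ℝ) → ℝ} {lE : Fin m₁ → ℝ} {lI : Fin m₂ → ℝ}
    {lZ : Fin s → ℝ} (hlI : ∀ j, cI (t, u + v) j ≠ 0 → lI j = 0)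
    {y : (Fin n → ℝ) × (Fin s → ℝ) × (Fin s → ℝ)} (hy : activeMap cE cI cZ t u v y = 0) :
    Lc f cE cI cZ lE lI lZ y = f y.1 := by
  simp only [activeMap, Prod.mk_eq_zero, funext_iff, Pi.zero_apply, Subtype.forall] at hy
  obtain ⟨⟨hyE, hyA, hyZ⟩, -⟩ := hy
  have hIdot : lI ⬝ᵥ cI (y.1, y.2.1 + y.2.2) = 0 := Finset.sum_eq_zero fun j _ => by
    by_cases hj : cI (t, u + v) j = 0
    · rw [hyA j hj, mul_zero]
    · rw [hlI j hj, zero_mul]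
  simp [Lc, funext hyE, show cZ (y.1, y.2.1 + y.2.2) - (y.2.1 - y.2.2) = 0 from funext hyZ, hIdot]

theorem fderiv_Lc_apply_eq_zero_of_activeMap_eq_zero {f : (Fin n → ℝ) → ℝ} {lE : Fin m₁ → ℝ}
    {lI : Fin m₂ → ℝ} {lZ : Fin s → ℝ} {μu μv : Fin s → ℝ} (hf : DifferentiableAt ℝ f t)
    (hE : DifferentiableAt ℝ cE (t, u + v)) (hI : DifferentiableAt ℝ cI (t, u + v))
    (hZ : DifferentiableAt ℝ cZ (t, u + v))
    (hstat : (fun j => fderiv ℝ f t (Pi.single j 1)) + (jac1 cE (t, u + v))ᵀ *ᵥ lE -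
      (jac1 cI (t, u + v))ᵀ *ᵥ lI + (jac1 cZ (t, u + v))ᵀ *ᵥ lZ = 0)
    (hμu : μu = (jac2 cE (t, u + v))ᵀ *ᵥ lE - (jac2 cI (t, u + v))ᵀ *ᵥ lI +
      (jac2 cZ (t, u + v) - 1)ᵀ *ᵥ lZ)
    (hμv : μv = (jac2 cE (t, u + v))ᵀ *ᵥ lE - (jac2 cI (t, u + v))ᵀ *ᵥ lI +
      (jac2 cZ (t, u + v) + 1)ᵀ *ᵥ lZ)
    (hμU : ∀ i, 0 < u i → μu i = 0) (hμV : ∀ i, 0 < v i → μv i = 0)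
    {y : (Fin n → ℝ) × (Fin s → ℝ) × (Fin s → ℝ)} (hy : activeMap cE cI cZ t u v y = 0) :
    fderiv ℝ (Lc f cE cI cZ lE lI lZ) (t, u, v) y = 0 := by
  simp only [activeMap, Prod.mk_eq_zero, funext_iff, Subtype.forall] at hy
  have hu0 : μu ⬝ᵥ y.2.1 = 0 := Finset.sum_eq_zero fun i _ =>
    mul_eq_zero.2 ((em _).imp (hμU i) (hy.2.1 i))
  have hv0 : μv ⬝ᵥ y.2.2 = 0 := Finset.sum_eq_zero fun i _ =>
    mul_eq_zero.2 ((em _).imp (hμV i) (hy.2.2 i))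
  rw [fderiv_Lc_apply lE lI lZ hf hE hI hZ, hstat, ← hμu, ← hμv, zero_dotProduct, hu0, hv0,
    zero_add, add_zero]

/-- Near `(t, u, v)` the zero set of `activeMap` lies in the MPCC feasible set, and on it
`Lc - ℓ` agrees with the objective. -/
theorem isLocalMinOn_Lc_sub_of_isLocalMinOn_mpccFeasible {Dt : Set (Fin n → ℝ)}
    {Dz : Set (Fin s → ℝ)} {f : (Fin n → ℝ) → ℝ}
    (hmin : IsLocalMinOn (fun q => f q.1) (mpccFeasible cE cI cZ Dt Dz) (t, u, v))
    (hDt : IsOpen Dt) (hDz : IsOpen Dz) (ht : t ∈ Dt) (huv : u + v ∈ Dz)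
    (hcompl : ∀ i, u i * v i = 0) (hfeasI : ∀ j, 0 ≤ cI (t, u + v) j)
    (hI : ContinuousAt cI (t, u + v)) (lE : Fin m₁ → ℝ) {lI : Fin m₂ → ℝ} (lZ : Fin s → ℝ)
    (hlI : ∀ j, 0 ≤ lI j) (hlIc : lI ⬝ᵥ cI (t, u + v) = 0)
    (ℓ : (Fin n → ℝ) × (Fin s → ℝ) × (Fin s → ℝ) →L[ℝ] ℝ)
    (hℓ : ∀ y, activeMap cE cI cZ t u v y = 0 → ℓ y = 0)
    (hx : activeMap cE cI cZ t u v (t, u, v) = 0) :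
    IsLocalMinOn (fun y => Lc f cE cI cZ lE lI lZ y - ℓ y)
      {y | activeMap cE cI cZ t u v y = 0} (t, u, v) := by
  have hlI0 : ∀ j, cI (t, u + v) j ≠ 0 → lI j = 0 := fun j hj =>
    (mul_eq_zero.1 ((Finset.sum_eq_zero_iff_of_nonneg fun k _ =>
      mul_nonneg (hlI k) (hfeasI k)).1 hlIc j (Finset.mem_univ j))).resolve_right hj
  have heq : ∀ y, activeMap cE cI cZ t u v y = 0 → Lc f cE cI cZ lE lI lZ y - ℓ y = f y.1 :=
    fun y hy => by rw [Lc_eq_of_activeMap_eq_zero hlI0 hy, hℓ y hy, sub_zero]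
  refine (hmin.filter_mono (nhdsWithin_le_iff.2 ?_)).congr
    (eventually_nhdsWithin_of_forall fun y hy => (heq y hy).symm) (heq _ hx).symm
  exact mem_nhdsWithin_iff_eventually.2
    (eventually_mem_mpccFeasible hDt hDz ht huv hcompl hfeasI hI)

end MPCC

theorem stmt13_general {n s m₁ m₂ : ℕ}
    (Dt : Set (Fin n → ℝ)) (Dz : Set (Fin s → ℝ))
    (hDt : IsOpen Dt) (hDz : IsOpen Dz)
    (f : (Fin n → ℝ) → ℝ)
    (cE : (Fin n → ℝ) × (Fin s → ℝ) → Fin m₁ → ℝ)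
    (cI : (Fin n → ℝ) × (Fin s → ℝ) → Fin m₂ → ℝ)
    (cZ : (Fin n → ℝ) × (Fin s → ℝ) → Fin s → ℝ)
    (hf : ContDiffOn ℝ 2 f Dt)
    (hcE : ContDiffOn ℝ 2 cE (Dt ×ˢ Dz))
    (hcI : ContDiffOn ℝ 2 cI (Dt ×ˢ Dz))
    (hcZ : ContDiffOn ℝ 2 cZ (Dt ×ˢ Dz))
    (tstar : Fin n → ℝ) (ustar vstar : Fin s → ℝ)
    (ht : tstar ∈ Dt) (huv : ustar + vstar ∈ Dz)
    (hu : ∀ i, 0 ≤ ustar i) (hv : ∀ i, 0 ≤ vstar i)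
    (hcompl : ∀ i, ustar i * vstar i = 0)
    (hfeasE : cE (tstar, ustar + vstar) = 0)
    (hfeasI : ∀ j, 0 ≤ cI (tstar, ustar + vstar) j)
    (hfeasZ : cZ (tstar, ustar + vstar) = ustar - vstar)
    (hmin : IsLocalMinOn
      (fun q : (Fin n → ℝ) × (Fin s → ℝ) × (Fin s → ℝ) => f q.1)
      {q | q.1 ∈ Dt ∧ q.2.1 + q.2.2 ∈ Dz ∧ (∀ i, 0 ≤ q.2.1 i) ∧ (∀ i, 0 ≤ q.2.2 i) ∧
        (∀ i, q.2.1 i * q.2.2 i = 0) ∧ cE (q.1, q.2.1 + q.2.2) = 0 ∧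
        (∀ j, 0 ≤ cI (q.1, q.2.1 + q.2.2) j) ∧
        cZ (q.1, q.2.1 + q.2.2) = q.2.1 - q.2.2}
      (tstar, ustar, vstar))
    -- MPCC-LICQ
    (hLICQ :
      (Matrix.fromRows
        (Matrix.fromCols (jac1 cE (tstar, ustar + vstar))
          (Matrix.fromCols
            (jac2 cE (tstar, ustar + vstar) * (sel fun i => 0 < ustar i)ᵀ)
            (jac2 cE (tstar, ustar + vstar) * (sel fun i => 0 < vstar i)ᵀ)))
        (Matrix.fromRows
          (Matrix.fromCols
            (sel (fun j => cI (tstar, ustar + vstar) j = 0) * jac1 cI (tstar, ustar + vstar))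
            (Matrix.fromCols
              (sel (fun j => cI (tstar, ustar + vstar) j = 0) *
                jac2 cI (tstar, ustar + vstar) * (sel fun i => 0 < ustar i)ᵀ)
              (sel (fun j => cI (tstar, ustar + vstar) j = 0) *
                jac2 cI (tstar, ustar + vstar) * (sel fun i => 0 < vstar i)ᵀ)))
          (Matrix.fromCols (jac1 cZ (tstar, ustar + vstar))
            (Matrix.fromCols
              ((jac2 cZ (tstar, ustar + vstar) - 1) * (sel fun i => 0 < ustar i)ᵀ)
              ((jac2 cZ (tstar, ustar + vstar) + 1) * (sel fun i => 0 < vstar i)ᵀ))))).rank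
      = m₁ + Fintype.card {j // cI (tstar, ustar + vstar) j = 0} + s)
    -- S-stationarity with multipliers (lE, lI, lZ, μu, μv)
    (lE : Fin m₁ → ℝ) (lI : Fin m₂ → ℝ) (lZ : Fin s → ℝ) (μu μv : Fin s → ℝ)
    (hstat : (fun j => fderiv ℝ f tstar (Pi.single j 1)) +
      (jac1 cE (tstar, ustar + vstar))ᵀ *ᵥ lE -
      (jac1 cI (tstar, ustar + vstar))ᵀ *ᵥ lI +
      (jac1 cZ (tstar, ustar + vstar))ᵀ *ᵥ lZ = 0)
    (hμu : μu = (jac2 cE (tstar, ustar + vstar))ᵀ *ᵥ lE -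
      (jac2 cI (tstar, ustar + vstar))ᵀ *ᵥ lI +
      (jac2 cZ (tstar, ustar + vstar) - 1)ᵀ *ᵥ lZ)
    (hμv : μv = (jac2 cE (tstar, ustar + vstar))ᵀ *ᵥ lE -
      (jac2 cI (tstar, ustar + vstar))ᵀ *ᵥ lI +
      (jac2 cZ (tstar, ustar + vstar) + 1)ᵀ *ᵥ lZ)
    (hμU : ∀ i, 0 < ustar i → μu i = 0)
    (hμV : ∀ i, 0 < vstar i → μv i = 0)
    (hlI : ∀ j, 0 ≤ lI j)
    (hlIc : lI ⬝ᵥ cI (tstar, ustar + vstar) = 0) :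
    ∀ (dt : Fin n → ℝ) (du dv : Fin s → ℝ),
      jac1 cE (tstar, ustar + vstar) *ᵥ dt +
        jac2 cE (tstar, ustar + vstar) *ᵥ (du + dv) = 0 →
      (∀ j, cI (tstar, ustar + vstar) j = 0 →
        (jac1 cI (tstar, ustar + vstar) *ᵥ dt +
          jac2 cI (tstar, ustar + vstar) *ᵥ (du + dv)) j = 0) →
      jac1 cZ (tstar, ustar + vstar) *ᵥ dt +
        (jac2 cZ (tstar, ustar + vstar) - 1) *ᵥ du +
        (jac2 cZ (tstar, ustar + vstar) + 1) *ᵥ dv = 0 →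
      (∀ i, 0 < vstar i ∨ (ustar i = 0 ∧ vstar i = 0) → du i = 0) →
      (∀ i, 0 < ustar i ∨ (ustar i = 0 ∧ vstar i = 0) → dv i = 0) →
      0 ≤ fderiv ℝ (fderiv ℝ (Lc f cE cI cZ lE lI lZ))
            (tstar, ustar, vstar) (dt, du, dv) (dt, du, dv) := by
  intro dt du dv hdE hdI hdZ hdu hdv
  have hp : Dt ×ˢ Dz ∈ 𝓝 (tstar, ustar + vstar) := (hDt.prod hDz).mem_nhds ⟨ht, huv⟩
  have hf₂ := hf.contDiffAt (hDt.mem_nhds ht)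
  have hE₂ := hcE.contDiffAt hp
  have hI₂ := hcI.contDiffAt hp
  have hZ₂ := hcZ.contDiffAt hp
  have hE₁ := hE₂.differentiableAt two_ne_zero
  have hI₁ := hI₂.differentiableAt two_ne_zero
  have hZ₁ := hZ₂.differentiableAt two_ne_zero
  have hL := contDiffAt_Lc lE lI lZ hf₂ hE₂ hI₂ hZ₂
  set ℓ := fderiv ℝ (Lc f cE cI cZ lE lI lZ) (tstar, ustar, vstar)
  have hx := activeMap_self_eq_zero (cI := cI) hu hv hfeasE hfeasZ
  have hmin' := isLocalMinOn_Lc_sub_of_isLocalMinOn_mpccFeasible hmin hDt hDz ht huv hcompl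
    hfeasI hI₂.continuousAt lE lZ hlI hlIc ℓ (fun y hy =>
      fderiv_Lc_apply_eq_zero_of_activeMap_eq_zero (hf₂.differentiableAt two_ne_zero) hE₁ hI₁ hZ₁
        hstat hμu hμv hμU hμV hy) hx
  rw [← hx] at hmin'
  have key := hmin'.fderiv_fderiv_nonneg_of_mem_ker (hL.sub ℓ.contDiff.contDiffAt)
    (by rw [fderiv_fun_sub (hL.differentiableAt two_ne_zero) ℓ.differentiableAt, ℓ.fderiv,
      sub_self])
    (contDiffAt_activeMap hE₂ hI₂ hZ₂) (range_fderiv_activeMap_eq_top hE₁ hI₁ hZ₁ hLICQ)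
    (fderiv_activeMap_apply_eq_zero hu hv hE₁ hI₁ hZ₁ hdE hdI hdZ hdu hdv)
  rwa [fderiv_fderiv_sub_clm ℓ ((hL.eventually (by simp)).mono fun y hy =>
    hy.differentiableAt two_ne_zero)] at key

/-- Second order necessary conditions for the counterpart MPCC under MPCC-LICQ and
MPCC-strict complementarity. -/
theorem stmt13 {n s m₁ m₂ : ℕ}
    (Dt : Set (Fin n → ℝ)) (Dz : Set (Fin s → ℝ))
    (hDt : IsOpen Dt) (hDz : IsOpen Dz)
    (hsym : ∀ z ∈ Dz, ∀ σ : Fin s → ℝ, (∀ i, σ i = -1 ∨ σ i = 0 ∨ σ i = 1) →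
      (fun i => σ i * z i) ∈ Dz)
    (f : (Fin n → ℝ) → ℝ)
    (cE : (Fin n → ℝ) × (Fin s → ℝ) → Fin m₁ → ℝ)
    (cI : (Fin n → ℝ) × (Fin s → ℝ) → Fin m₂ → ℝ)
    (cZ : (Fin n → ℝ) × (Fin s → ℝ) → Fin s → ℝ)
    (hf : ContDiffOn ℝ 2 f Dt)
    (hcE : ContDiffOn ℝ 2 cE (Dt ×ˢ Dz))
    (hcI : ContDiffOn ℝ 2 cI (Dt ×ˢ Dz))
    (hcZ : ContDiffOn ℝ 2 cZ (Dt ×ˢ Dz))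
    (tstar : Fin n → ℝ) (ustar vstar : Fin s → ℝ)
    (ht : tstar ∈ Dt) (huv : ustar + vstar ∈ Dz)
    (hu : ∀ i, 0 ≤ ustar i) (hv : ∀ i, 0 ≤ vstar i)
    (hcompl : ∀ i, ustar i * vstar i = 0)
    (hfeasE : cE (tstar, ustar + vstar) = 0)
    (hfeasI : ∀ j, 0 ≤ cI (tstar, ustar + vstar) j)
    (hfeasZ : cZ (tstar, ustar + vstar) = ustar - vstar)
    (hmin : IsLocalMinOn
      (fun q : (Fin n → ℝ) × (Fin s → ℝ) × (Fin s → ℝ) => f q.1)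
      {q | q.1 ∈ Dt ∧ q.2.1 + q.2.2 ∈ Dz ∧ (∀ i, 0 ≤ q.2.1 i) ∧ (∀ i, 0 ≤ q.2.2 i) ∧
        (∀ i, q.2.1 i * q.2.2 i = 0) ∧ cE (q.1, q.2.1 + q.2.2) = 0 ∧
        (∀ j, 0 ≤ cI (q.1, q.2.1 + q.2.2) j) ∧
        cZ (q.1, q.2.1 + q.2.2) = q.2.1 - q.2.2}
      (tstar, ustar, vstar))
    -- MPCC-LICQ
    (hLICQ :
      (Matrix.fromRows
        (Matrix.fromCols (jac1 cE (tstar, ustar + vstar))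
          (Matrix.fromCols
            (jac2 cE (tstar, ustar + vstar) * (sel fun i => 0 < ustar i)ᵀ)
            (jac2 cE (tstar, ustar + vstar) * (sel fun i => 0 < vstar i)ᵀ)))
        (Matrix.fromRows
          (Matrix.fromCols
            (sel (fun j => cI (tstar, ustar + vstar) j = 0) * jac1 cI (tstar, ustar + vstar))
            (Matrix.fromCols
              (sel (fun j => cI (tstar, ustar + vstar) j = 0) *
                jac2 cI (tstar, ustar + vstar) * (sel fun i => 0 < ustar i)ᵀ)
              (sel (fun j => cI (tstar, ustar + vstar) j = 0) *
                jac2 cI (tstar, ustar + vstar) * (sel fun i => 0 < vstar i)ᵀ)))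
          (Matrix.fromCols (jac1 cZ (tstar, ustar + vstar))
            (Matrix.fromCols
              ((jac2 cZ (tstar, ustar + vstar) - 1) * (sel fun i => 0 < ustar i)ᵀ)
              ((jac2 cZ (tstar, ustar + vstar) + 1) * (sel fun i => 0 < vstar i)ᵀ))))).rank
      = m₁ + Fintype.card {j // cI (tstar, ustar + vstar) j = 0} + s)
    -- S-stationarity with multipliers (lE, lI, lZ, μu, μv)
    (lE : Fin m₁ → ℝ) (lI : Fin m₂ → ℝ) (lZ : Fin s → ℝ) (μu μv : Fin s → ℝ)
    (hstat : (fun j => fderiv ℝ f tstar (Pi.single j 1)) +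
      (jac1 cE (tstar, ustar + vstar))ᵀ *ᵥ lE -
      (jac1 cI (tstar, ustar + vstar))ᵀ *ᵥ lI +
      (jac1 cZ (tstar, ustar + vstar))ᵀ *ᵥ lZ = 0)
    (hμu : μu = (jac2 cE (tstar, ustar + vstar))ᵀ *ᵥ lE -
      (jac2 cI (tstar, ustar + vstar))ᵀ *ᵥ lI +
      (jac2 cZ (tstar, ustar + vstar) - 1)ᵀ *ᵥ lZ)
    (hμv : μv = (jac2 cE (tstar, ustar + vstar))ᵀ *ᵥ lE -
      (jac2 cI (tstar, ustar + vstar))ᵀ *ᵥ lI +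
      (jac2 cZ (tstar, ustar + vstar) + 1)ᵀ *ᵥ lZ)
    (hμD : ∀ i, ustar i = 0 ∧ vstar i = 0 → 0 ≤ μu i ∧ 0 ≤ μv i)
    (hμU : ∀ i, 0 < ustar i → μu i = 0)
    (hμV : ∀ i, 0 < vstar i → μv i = 0)
    (hlI : ∀ j, 0 ≤ lI j)
    (hlIc : lI ⬝ᵥ cI (tstar, ustar + vstar) = 0)
    -- MPCC-strict complementarity
    (hsc1 : ∀ j, cI (tstar, ustar + vstar) j = 0 → 0 < lI j)
    (hsc2 : ∀ i, ustar i = 0 ∧ vstar i = 0 → 0 < μu i ∧ 0 < μv i) :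
    ∀ (dt : Fin n → ℝ) (du dv : Fin s → ℝ),
      jac1 cE (tstar, ustar + vstar) *ᵥ dt +
        jac2 cE (tstar, ustar + vstar) *ᵥ (du + dv) = 0 →
      (∀ j, cI (tstar, ustar + vstar) j = 0 →
        (jac1 cI (tstar, ustar + vstar) *ᵥ dt +
          jac2 cI (tstar, ustar + vstar) *ᵥ (du + dv)) j = 0) →
      jac1 cZ (tstar, ustar + vstar) *ᵥ dt +
        (jac2 cZ (tstar, ustar + vstar) - 1) *ᵥ du +
        (jac2 cZ (tstar, ustar + vstar) + 1) *ᵥ dv = 0 →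
      (∀ i, 0 < vstar i ∨ (ustar i = 0 ∧ vstar i = 0) → du i = 0) →
      (∀ i, 0 < ustar i ∨ (ustar i = 0 ∧ vstar i = 0) → dv i = 0) →
      0 ≤ fderiv ℝ (fderiv ℝ (Lc f cE cI cZ lE lI lZ))
            (tstar, ustar, vstar) (dt, du, dv) (dt, du, dv) :=
  stmt13_general Dt Dz hDt hDz f cE cI cZ hf hcE hcI hcZ tstar ustar vstar ht huv hu hv hcompl
    hfeasE hfeasI hfeasZ hmin hLICQ lE lI lZ μu μv hstat hμu hμv hμU hμV hlI hlIc

end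
end

section
/- Let H₁₁ ∈ ℝ^{n×n}, H₁₂ ∈ ℝ^{n×s}, H₂₁ ∈ ℝ^{s×n}, H₂₂ ∈ ℝ^{s×s}, W ∈ ℝ^{s×n}, and U ∈ ℝ^{n×k} be real matrices, let σ ∈ {−1,0,1}^s with Σ = diag(σ), U₊ = {i : σᵢ = 1}, V₊ = {i : σᵢ = −1}, and α^c = U₊ ∪ V₊. Define U_mpcc = [[U], [P_{U₊}WU], [−P_{V₊}WU]] ∈ ℝ^{(n+|U₊|+|V₊|)×k}, H_mpcc = [[H₁₁, H₁₂P_{U₊}ᵀ, H₁₂P_{V₊}ᵀ], [P_{U₊}H₂₁, P_{U₊}H₂₂P_{U₊}ᵀ, P_{U₊}H₂₂P_{V₊}ᵀ], [P_{V₊}H₂₁, P_{V₊}H₂₂P_{U₊}ᵀ, P_{V₊}H₂₂P_{V₊}ᵀ]], U_abs = [[U], [P_{α^c}ΣWU]] ∈ ℝ^{(n+|α^c|)×k}, and H_abs = [[H₁₁, H₁₂P_{α^c}ᵀ], [P_{α^c}H₂₁, P_{α^c}H₂₂P_{α^c}ᵀ]]. Then U_mpccᵀ H_mpcc U_mpcc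 = U_absᵀ H_abs U_abs. In particular, U_mpccᵀ H_mpcc U_mpcc is positive semidefinite (respectively positive definite) if and only if U_absᵀ H_abs U_abs is positive semidefinite (respectively positive definite). (With H the Hessian blocks of the Lagrangian, W = ∂_t z(t*) and U a nullspace basis of the LIKQ Jacobian, this is the equivalence of the second order conditions for the abs-normal NLP and its counterpart MPCC.) -/
/-!
Both reduced Hessians are congruence transforms `Zᵀ H Z` of the full Hessian
`H = [[H₁₁, H₁₂], [H₂₁, H₂₂]]`: a block `P H₂₂ Pᵀ` built from a selection `P` is absorbed by
replacing the lower block `V` of `Z` with `Pᵀ V`. For the MPCC this lower block becomes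
`(P_{U₊}ᵀ P_{U₊} - P_{V₊}ᵀ P_{V₊}) W U`, for the abs-normal form `P_{αᶜ}ᵀ P_{αᶜ} Σ W U`, and since
`σ ∈ {-1, 0, 1}` both equal `Σ W U`.
-/

open Matrix
open scoped Classical

noncomputable section

/-- `U_mpcc = [[U], [P_{U₊} W U], [−P_{V₊} W U]]`. -/
def Umpcc {n s k : ℕ} (W : Matrix (Fin s) (Fin n) ℝ) (U : Matrix (Fin n) (Fin k) ℝ)
    (σ : Fin s → ℝ) :
    Matrix (Fin n ⊕ ({i // σ i = 1} ⊕ {i // σ i = -1})) (Fin k) ℝ :=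
  Matrix.fromRows U
    (Matrix.fromRows (sel (fun i => σ i = 1) * W * U)
      (-(sel (fun i => σ i = -1) * W * U)))

/-- `H_mpcc`, the Hessian blocks in the MPCC variables. -/
def Hmpcc {n s : ℕ} (H₁₁ : Matrix (Fin n) (Fin n) ℝ) (H₁₂ : Matrix (Fin n) (Fin s) ℝ)
    (H₂₁ : Matrix (Fin s) (Fin n) ℝ) (H₂₂ : Matrix (Fin s) (Fin s) ℝ)
    (σ : Fin s → ℝ) :
    Matrix (Fin n ⊕ ({i // σ i = 1} ⊕ {i // σ i = -1}))
      (Fin n ⊕ ({i // σ i = 1} ⊕ {i // σ i = -1})) ℝ :=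
  Matrix.fromRows
    (Matrix.fromCols H₁₁ (Matrix.fromCols
      (H₁₂ * (sel fun i => σ i = 1)ᵀ) (H₁₂ * (sel fun i => σ i = -1)ᵀ)))
    (Matrix.fromRows
      (Matrix.fromCols (sel (fun i => σ i = 1) * H₂₁) (Matrix.fromCols
        (sel (fun i => σ i = 1) * H₂₂ * (sel fun i => σ i = 1)ᵀ)
        (sel (fun i => σ i = 1) * H₂₂ * (sel fun i => σ i = -1)ᵀ)))
      (Matrix.fromCols (sel (fun i => σ i = -1) * H₂₁) (Matrix.fromCols
        (sel (fun i => σ i = -1) * H₂₂ * (sel fun i => σ i = 1)ᵀ)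
        (sel (fun i => σ i = -1) * H₂₂ * (sel fun i => σ i = -1)ᵀ))))

/-- `U_abs = [[U], [P_{αᶜ} Σ W U]]`. -/
def Uabs {n s k : ℕ} (W : Matrix (Fin s) (Fin n) ℝ) (U : Matrix (Fin n) (Fin k) ℝ)
    (σ : Fin s → ℝ) : Matrix (Fin n ⊕ {i // σ i ≠ 0}) (Fin k) ℝ :=
  Matrix.fromRows U (sel (fun i => σ i ≠ 0) * (Matrix.diagonal σ * W * U))

/-- `H_abs`, the Hessian blocks in the abs-normal variables. -/
def Habs {n s : ℕ} (H₁₁ : Matrix (Fin n) (Fin n) ℝ) (H₁₂ : Matrix (Fin n) (Fin s) ℝ)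
    (H₂₁ : Matrix (Fin s) (Fin n) ℝ) (H₂₂ : Matrix (Fin s) (Fin s) ℝ)
    (σ : Fin s → ℝ) : Matrix (Fin n ⊕ {i // σ i ≠ 0}) (Fin n ⊕ {i // σ i ≠ 0}) ℝ :=
  Matrix.fromBlocks H₁₁ (H₁₂ * (sel fun i => σ i ≠ 0)ᵀ)
    (sel (fun i => σ i ≠ 0) * H₂₁)
    (sel (fun i => σ i ≠ 0) * H₂₂ * (sel fun i => σ i ≠ 0)ᵀ)

theorem fromRows_transpose_mul_fromBlocks_mul_fromRows {R l m n k : Type*} [CommRing R]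
    [Fintype l] [Fintype m] [Fintype n]
    (H₁₁ : Matrix n n R) (H₁₂ : Matrix n m R) (H₂₁ : Matrix m n R) (H₂₂ : Matrix m m R)
    (P : Matrix l m R) (U : Matrix n k R) (V : Matrix l k R) :
    (fromRows U V)ᵀ * fromBlocks H₁₁ (H₁₂ * Pᵀ) (P * H₂₁) (P * H₂₂ * Pᵀ) * fromRows U V =
      (fromRows U (Pᵀ * V))ᵀ * fromBlocks H₁₁ H₁₂ H₂₁ H₂₂ * fromRows U (Pᵀ * V) := by
  simp only [transpose_fromRows, fromCols_mul_fromBlocks, fromCols_mul_fromRows, transpose_mul,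
    transpose_transpose, Matrix.add_mul, Matrix.mul_assoc]

theorem sel_transpose_mul_sel {k : ℕ} (p : Fin k → Prop) [Fintype {i // p i}] :
    (sel p)ᵀ * sel p = diagonal fun i => if p i then (1 : ℝ) else 0 := by
  ext i j
  by_cases hp : p i
  · rw [mul_apply, Finset.sum_eq_single ⟨i, hp⟩] <;> aesop (add simp [sel, diagonal_apply])
  · refine (Finset.sum_eq_zero fun x _ => ?_).trans (by simp [diagonal_apply, hp])
    have hx : (x : Fin k) ≠ i := fun h => hp (h ▸ x.2)
    simp [sel, hx]

section

variable {n s : ℕ} (σ : Fin s → ℝ)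

theorem sel_transpose_mul_sel_sub_eq_diagonal (hσ : ∀ i, σ i = -1 ∨ σ i = 0 ∨ σ i = 1) :
    (sel fun i => σ i = 1)ᵀ * sel (fun i => σ i = 1) -
        (sel fun i => σ i = -1)ᵀ * sel (fun i => σ i = -1) = diagonal σ := by
  rw [sel_transpose_mul_sel, sel_transpose_mul_sel, diagonal_sub]
  congr 1
  funext i
  rcases hσ i with h | h | h <;> norm_num [h]

theorem sel_ne_zero_transpose_mul_sel_mul_diagonal :
    (sel fun i => σ i ≠ 0)ᵀ * sel (fun i => σ i ≠ 0) * diagonal σ = diagonal σ := by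
  rw [sel_transpose_mul_sel, diagonal_mul_diagonal]
  congr 1
  funext i
  by_cases h : σ i = 0 <;> simp [h]

theorem Hmpcc_eq_fromBlocks (H₁₁ : Matrix (Fin n) (Fin n) ℝ) (H₁₂ : Matrix (Fin n) (Fin s) ℝ)
    (H₂₁ : Matrix (Fin s) (Fin n) ℝ) (H₂₂ : Matrix (Fin s) (Fin s) ℝ) :
    Hmpcc H₁₁ H₁₂ H₂₁ H₂₂ σ =
      let P := fromRows (sel fun i => σ i = 1) (sel fun i => σ i = -1)
      fromBlocks H₁₁ (H₁₂ * Pᵀ) (P * H₂₁) (P * H₂₂ * Pᵀ) := by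
  simp only [transpose_fromRows, mul_fromCols, fromRows_mul]
  ext (i | i | i) (j | j | j) <;> rfl

variable {k : ℕ} (H₁₁ : Matrix (Fin n) (Fin n) ℝ) (H₁₂ : Matrix (Fin n) (Fin s) ℝ)
  (H₂₁ : Matrix (Fin s) (Fin n) ℝ) (H₂₂ : Matrix (Fin s) (Fin s) ℝ)
  (W : Matrix (Fin s) (Fin n) ℝ) (U : Matrix (Fin n) (Fin k) ℝ)

theorem Umpcc_transpose_mul_Hmpcc_mul_Umpcc (hσ : ∀ i, σ i = -1 ∨ σ i = 0 ∨ σ i = 1) :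
    (Umpcc W U σ)ᵀ * Hmpcc H₁₁ H₁₂ H₂₁ H₂₂ σ * Umpcc W U σ =
      (fromRows U (diagonal σ * W * U))ᵀ * fromBlocks H₁₁ H₁₂ H₂₁ H₂₂ *
        fromRows U (diagonal σ * W * U) := by
  have hV : (fromRows (sel fun i => σ i = 1) (sel fun i => σ i = -1))ᵀ *
      fromRows (sel (fun i => σ i = 1) * W * U) (-(sel (fun i => σ i = -1) * W * U)) =
      diagonal σ * W * U := by
    rw [transpose_fromRows, fromCols_mul_fromRows, Matrix.mul_neg, ← sub_eq_add_neg]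
    simp only [← Matrix.mul_assoc, ← Matrix.sub_mul, sel_transpose_mul_sel_sub_eq_diagonal σ hσ]
  rw [Hmpcc_eq_fromBlocks, Umpcc, fromRows_transpose_mul_fromBlocks_mul_fromRows, hV]

theorem Uabs_transpose_mul_Habs_mul_Uabs :
    (Uabs W U σ)ᵀ * Habs H₁₁ H₁₂ H₂₁ H₂₂ σ * Uabs W U σ =
      (fromRows U (diagonal σ * W * U))ᵀ * fromBlocks H₁₁ H₁₂ H₂₁ H₂₂ *
        fromRows U (diagonal σ * W * U) := by
  rw [Uabs, Habs, fromRows_transpose_mul_fromBlocks_mul_fromRows]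
  simp only [← Matrix.mul_assoc, sel_ne_zero_transpose_mul_sel_mul_diagonal]

end

/-- Equivalence of the reduced Hessians for the abs-normal NLP and its counterpart
MPCC: `U_mpccᵀ H_mpcc U_mpcc = U_absᵀ H_abs U_abs`; in particular the two reduced
Hessians are simultaneously positive semidefinite respectively positive definite. -/
theorem stmt15 {n s k : ℕ}
    (H₁₁ : Matrix (Fin n) (Fin n) ℝ) (H₁₂ : Matrix (Fin n) (Fin s) ℝ)
    (H₂₁ : Matrix (Fin s) (Fin n) ℝ) (H₂₂ : Matrix (Fin s) (Fin s) ℝ)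
    (W : Matrix (Fin s) (Fin n) ℝ) (U : Matrix (Fin n) (Fin k) ℝ)
    (σ : Fin s → ℝ) (hσ : ∀ i, σ i = -1 ∨ σ i = 0 ∨ σ i = 1) :
    (Umpcc W U σ)ᵀ * Hmpcc H₁₁ H₁₂ H₂₁ H₂₂ σ * Umpcc W U σ =
      (Uabs W U σ)ᵀ * Habs H₁₁ H₁₂ H₂₁ H₂₂ σ * Uabs W U σ ∧
    ((∀ x : Fin k → ℝ,
        0 ≤ x ⬝ᵥ (((Umpcc W U σ)ᵀ * Hmpcc H₁₁ H₁₂ H₂₁ H₂₂ σ * Umpcc W U σ) *ᵥ x)) ↔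
      (∀ x : Fin k → ℝ,
        0 ≤ x ⬝ᵥ (((Uabs W U σ)ᵀ * Habs H₁₁ H₁₂ H₂₁ H₂₂ σ * Uabs W U σ) *ᵥ x))) ∧
    ((∀ x : Fin k → ℝ, x ≠ 0 →
        0 < x ⬝ᵥ (((Umpcc W U σ)ᵀ * Hmpcc H₁₁ H₁₂ H₂₁ H₂₂ σ * Umpcc W U σ) *ᵥ x)) ↔
      (∀ x : Fin k → ℝ, x ≠ 0 →
        0 < x ⬝ᵥ (((Uabs W U σ)ᵀ * Habs H₁₁ H₁₂ H₂₁ H₂₂ σ * Uabs W U σ) *ᵥ x))) := by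
  have heq := (Umpcc_transpose_mul_Hmpcc_mul_Umpcc σ H₁₁ H₁₂ H₂₁ H₂₂ W U hσ).trans
    (Uabs_transpose_mul_Habs_mul_Uabs σ H₁₁ H₁₂ H₂₁ H₂₂ W U).symm
  exact ⟨heq, by rw [heq], by rw [heq]⟩

end
end
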